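/- arXiv:2105.11268 — 10 statements merged into one kernel-verified Lean document; each statement's English description precedes it below -/
import Mathlib

section
/- Every stochastic choice data set ρ admits a stable RAUM representation. In particular, for an arbitrary probability distribution π* on U, the rule defined on menus A ∈ 𝒜 by π_A(≻, φ_{{a}}) = π*(≻)·ρ_A(a) for each a ∈ A (with π_A(≻,φ) = 0 for all other filters), and extended to menus A ∉ 𝒜 by placing, for each ≻, mass π*(≻) on a single feasible filter, is a stable RAUM representation of ρ. -/
open Finset

/-- A strict linear order on `X`, encoded as a Boolean relation. -/
def IsPref {X : Type*} (r : X → X → Bool) : Prop :=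
  (∀ a, ¬ r a a) ∧ (∀ a b c, r a b → r b c → r a c) ∧ (∀ a b, a ≠ b → (r a b ∨ r b a))

instance {X : Type*} [Fintype X] [DecidableEq X] : DecidablePred (IsPref (X := X)) :=
  fun r => by unfold IsPref; infer_instance

/-- The set `U` of strict linear orders (preferences) on `X`. -/
abbrev Pref (X : Type*) [Fintype X] [DecidableEq X] := {r : X → X → Bool // IsPref r}

/-- The set `Φ` of consideration filters, indexed by nonempty consideration sets `D ⊆ X`. -/
abbrev Filt (X : Type*) := {D : Finset X // D.Nonempty}

/-- The filter `φ_D` applied to a menu `A`: it returns `D` if `D ⊆ A`, and `∅` otherwise. -/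
def fapp {X : Type*} [DecidableEq X] (φ : Filt X) (A : Finset X) : Finset X :=
  if φ.1 ⊆ A then φ.1 else ∅

/-- `a` is considered and is the `r`-best alternative in `S`. -/
def wins {X : Type*} [DecidableEq X] (r : X → X → Bool) (a : X) (S : Finset X) : Prop :=
  a ∈ S ∧ ∀ b ∈ S.erase a, r a b

instance {X : Type*} [DecidableEq X] (r : X → X → Bool) (a : X) (S : Finset X) :
    Decidable (wins r a S) := by unfold wins; infer_instance

/-- A RAUM rule: for every menu (nonempty `A ⊆ X`), a probability distribution on `U × Φ`
that puts no mass on filters that are infeasible at `A`. -/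
structure RAUM (X : Type*) [Fintype X] [DecidableEq X] where
  p : Finset X → Pref X → Filt X → ℝ
  nonneg : ∀ A : Finset X, A.Nonempty → ∀ pr φ, 0 ≤ p A pr φ
  sum_one : ∀ A : Finset X, A.Nonempty → ∑ pr : Pref X, ∑ φ : Filt X, p A pr φ = 1
  feas : ∀ A : Finset X, A.Nonempty → ∀ pr φ, fapp φ A = ∅ → p A pr φ = 0

/-- A stochastic choice data set on the collection of menus `𝒜`. -/
def IsSCD {X : Type*} [DecidableEq X] (𝒜 : Finset (Finset X)) (ρ : Finset X → X → ℝ) : Prop :=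
  𝒜.Nonempty ∧ (∀ A ∈ 𝒜, A.Nonempty) ∧
    ∀ A ∈ 𝒜, (∀ a ∈ A, 0 ≤ ρ A a) ∧ ∑ a ∈ A, ρ A a = 1

/-- `ρ` admits the RAUM representation `π`. -/
def Represents {X : Type*} [Fintype X] [DecidableEq X] (ρ : Finset X → X → ℝ)
    (𝒜 : Finset (Finset X)) (π : RAUM X) : Prop :=
  ∀ A ∈ 𝒜, ∀ a ∈ A,
    ρ A a = ∑ pr : Pref X, ∑ φ : Filt X,
      π.p A pr φ * (if wins pr.1 a (fapp φ A) then (1 : ℝ) else 0)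

/-- `π` is stable with marginal preference distribution `pstar`. -/
def Stable {X : Type*} [Fintype X] [DecidableEq X] (π : RAUM X) (pstar : Pref X → ℝ) : Prop :=
  (∀ pr, 0 ≤ pstar pr) ∧ (∑ pr : Pref X, pstar pr = 1) ∧
    ∀ A : Finset X, A.Nonempty → ∀ pr, ∑ φ : Filt X, π.p A pr φ = pstar pr

/-- `π` is set-monotone. -/
def SetMonotone {X : Type*} [Fintype X] [DecidableEq X] (π : RAUM X) : Prop :=
  ∃ lam : Finset X → Pref X → Filt X → ℝ,
    (∀ A : Finset X, A.Nonempty → ∀ pr,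
      (∀ φ, 0 ≤ lam A pr φ) ∧ (∑ φ : Filt X, lam A pr φ = 1)) ∧
    (∀ A : Finset X, A.Nonempty → ∀ pr φ, fapp φ A = ∅ → lam A pr φ = 0) ∧
    (∀ A B : Finset X, A.Nonempty → A ⊆ B → ∀ pr φ, fapp φ A ≠ ∅ → lam B pr φ ≤ lam A pr φ) ∧
    (∀ A : Finset X, A.Nonempty → ∀ pr φ, π.p A pr φ = lam A pr φ * ∑ φ' : Filt X, π.p A pr φ')

/-- Every stochastic choice data set admits a stable RAUM representation.
In particular, for an arbitrary probability distribution `pstar` on `U`, the rule given on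
menus `A ∈ 𝒜` by `π_A(≻, φ_{{a}}) = pstar(≻) · ρ_A(a)` for each `a ∈ A` (and zero on all
other filters), extended to menus `A ∉ 𝒜` by placing, for each `≻`, mass `pstar(≻)` on a
single feasible filter `φsel A`, is a stable RAUM representation of `ρ`. -/
theorem stmt0 {X : Type*} [Fintype X] [DecidableEq X]
    (𝒜 : Finset (Finset X)) (ρ : Finset X → X → ℝ) (hSCD : IsSCD 𝒜 ρ)
    (pstar : Pref X → ℝ) (hp0 : ∀ pr, 0 ≤ pstar pr) (hp1 : ∑ pr : Pref X, pstar pr = 1)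
    (φsel : Finset X → Filt X) (hsel : ∀ A : Finset X, A.Nonempty → (φsel A).1 ⊆ A) :
    ∃ π : RAUM X,
      π.p = (fun A pr φ =>
        if A ∈ 𝒜 then ∑ a ∈ A, (if φ.1 = {a} then pstar pr * ρ A a else 0)
        else (if φ = φsel A then pstar pr else 0)) ∧
      Stable π pstar ∧ Represents ρ 𝒜 π := by
  classical
  obtain ⟨h𝒜ne, h𝒜nonempty, hprob⟩ := hSCD
  set p : Finset X → Pref X → Filt X → ℝ := fun A pr φ =>
    if A ∈ 𝒜 then ∑ a ∈ A, (if φ.1 = {a} then pstar pr * ρ A a else 0)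
    else (if φ = φsel A then pstar pr else 0) with hpdef
  have key : ∀ (a : X) (c : ℝ), ∑ φ : Filt X, (if φ.1 = ({a} : Finset X) then c else 0) = c := by
    intro a c
    rw [Finset.sum_eq_single (⟨{a}, Finset.singleton_nonempty a⟩ : Filt X)]
    · simp
    · intro φ _ hφ
      rw [if_neg]
      intro h; exact hφ (Subtype.ext h)
    · simp
  have hsum : ∀ A : Finset X, A.Nonempty → ∀ pr, ∑ φ : Filt X, p A pr φ = pstar pr := by
    intro A hA pr
    by_cases hmem : A ∈ 𝒜
    · simp only [hpdef, if_pos hmem]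
      rw [Finset.sum_comm]
      have : ∀ a ∈ A, ∑ φ : Filt X, (if φ.1 = ({a} : Finset X) then pstar pr * ρ A a else 0)
          = pstar pr * ρ A a := fun a _ => key a _
      rw [Finset.sum_congr rfl this, ← Finset.mul_sum, (hprob A hmem).2, mul_one]
    · simp [hpdef, if_neg hmem]
  have hnn : ∀ A : Finset X, A.Nonempty → ∀ pr φ, 0 ≤ p A pr φ := by
    intro A hA pr φ
    by_cases hmem : A ∈ 𝒜
    · simp only [hpdef, if_pos hmem]
      apply Finset.sum_nonneg
      intro a ha
      by_cases h : φ.1 = ({a} : Finset X)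
      · rw [if_pos h]; exact mul_nonneg (hp0 pr) ((hprob A hmem).1 a ha)
      · rw [if_neg h]
    · simp only [hpdef, if_neg hmem]
      by_cases h : φ = φsel A
      · rw [if_pos h]; exact hp0 pr
      · rw [if_neg h]
  have hfeas : ∀ A : Finset X, A.Nonempty → ∀ pr φ, fapp φ A = ∅ → p A pr φ = 0 := by
    intro A hA pr φ hf
    have hnotsub : ¬ φ.1 ⊆ A := by
      intro hsub
      rw [fapp, if_pos hsub] at hf
      exact φ.2.ne_empty hf
    by_cases hmem : A ∈ 𝒜
    · simp only [hpdef, if_pos hmem]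
      apply Finset.sum_eq_zero
      intro a ha
      rw [if_neg]
      intro h
      exact hnotsub (h ▸ Finset.singleton_subset_iff.mpr ha)
    · simp only [hpdef, if_neg hmem]
      rw [if_neg]
      intro h
      exact hnotsub (h ▸ hsel A hA)
  refine ⟨⟨p, hnn, fun A hA => by
      rw [Finset.sum_congr rfl fun pr _ => hsum A hA pr, hp1], hfeas⟩, rfl, ⟨hp0, hp1,
      fun A hA pr => hsum A hA pr⟩, ?_⟩
  intro A hmem a ha
  have hA := h𝒜nonempty A hmem
  have hwins : ∀ (pr : Pref X) (b : X),
      (if wins pr.1 a ({b} : Finset X) then (1:ℝ) else 0) = if a = b then 1 else 0 := by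
    intro pr b
    by_cases h : a = b
    · subst h; simp [wins]
    · rw [if_neg, if_neg h]
      rintro ⟨hm, -⟩
      exact h (Finset.mem_singleton.mp hm)
  have inner : ∀ pr : Pref X, ∑ φ : Filt X,
      p A pr φ * (if wins pr.1 a (fapp φ A) then (1:ℝ) else 0) = pstar pr * ρ A a := by
    intro pr
    simp only [hpdef, if_pos hmem, Finset.sum_mul]
    rw [Finset.sum_comm]
    have step : ∀ b ∈ A, ∑ φ : Filt X,
        (if φ.1 = ({b} : Finset X) then pstar pr * ρ A b else 0)
          * (if wins pr.1 a (fapp φ A) then (1:ℝ) else 0)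
        = pstar pr * ρ A b * (if a = b then 1 else 0) := by
      intro b hb
      have : ∀ φ : Filt X,
          (if φ.1 = ({b} : Finset X) then pstar pr * ρ A b else 0)
            * (if wins pr.1 a (fapp φ A) then (1:ℝ) else 0)
          = (if φ.1 = ({b} : Finset X) then
              pstar pr * ρ A b * (if a = b then 1 else 0) else 0) := by
        intro φ
        by_cases h : φ.1 = ({b} : Finset X)
        · rw [if_pos h, if_pos h]
          have hfb : fapp φ A = ({b} : Finset X) := by
            rw [fapp, if_pos (h ▸ Finset.singleton_subset_iff.mpr hb : φ.1 ⊆ A), h]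
          rw [hfb, hwins pr b]
        · rw [if_neg h, if_neg h, zero_mul]
      rw [Finset.sum_congr rfl fun φ _ => this φ, key b]
    rw [Finset.sum_congr rfl step]
    rw [Finset.sum_eq_single a]
    · simp
    · intro b _ hb; rw [if_neg (Ne.symm hb), mul_zero]
    · intro h; exact absurd ha h
  rw [Finset.sum_congr rfl fun pr _ => inner pr, ← Finset.sum_mul, hp1, one_mul]
end

section
/- Every stochastic choice data set ρ admits a set-monotone RAUM representation. In particular, for each A ∈ 𝒜 and ≻ ∈ U, letting a_{≻,A} denote the ≻-best element of A and κ_{≻,A} the number of orders ≻' ∈ U with a_{≻',A} = a_{≻,A}, the rule π_A(≻,φ) = 1{φ(A) = A}·ρ_A(a_{≻,A})/κ_{≻,A} on menus A ∈ 𝒜 (extended to A ∉ 𝒜 by π_A(≻,φ) = 1{φ(A)=A}·m_A(≻) for an arbitrary probability distribution m_A on U) is a set-monotone RAUM representation of ρ. -/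
open Finset

lemma pref_exists_top {X : Type*} [Fintype X] [DecidableEq X] (a : X) :
    ∃ pr : Pref X, ∀ b, b ≠ a → pr.1 a b = true := by
  classical
  let e := Fintype.equivFin X
  refine ⟨⟨fun x y => if y = a then false else if x = a then true else decide (e x < e y),
    ?_, ?_, ?_⟩, ?_⟩
  · intro x
    by_cases hx : x = a <;> simp [hx]
  · intro x y z hxy hyz
    simp only [Bool.if_false_left, Bool.if_true_left] at *
    by_cases hy : y = a <;> by_cases hz : z = a <;> by_cases hx : x = a <;>
      simp_all
    exact lt_trans hxy hyz
  · intro x y hxy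
    by_cases hy : y = a
    · subst hy; simp [hxy]
    · by_cases hx : x = a
      · simp [hx, hy]
      · have : e x ≠ e y := fun h => hxy (e.injective h)
        rcases this.lt_or_gt with h | h <;> simp [hx, hy, h, (e.injective.ne hxy)]
  · intro b hb
    simp [hb]

lemma wins_unique {X : Type*} [DecidableEq X] {r : X → X → Bool} (hr : IsPref r)
    {a b : X} {S : Finset X} (ha : wins r a S) (hb : wins r b S) : a = b := by
  by_contra hab
  have h1 : r a b := ha.2 b (Finset.mem_erase.mpr ⟨fun h => hab h.symm, hb.1⟩)
  have h2 : r b a := hb.2 a (Finset.mem_erase.mpr ⟨hab, ha.1⟩)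
  exact hr.1 a (hr.2.1 a b a h1 h2)

lemma fapp_eq_self_iff {X : Type*} [DecidableEq X] {A : Finset X} (hA : A.Nonempty)
    (φ : Filt X) : fapp φ A = A ↔ φ = ⟨A, hA⟩ := by
  unfold fapp
  constructor
  · intro h
    split at h
    · exact Subtype.ext h
    · exact absurd h.symm hA.ne_empty
  · intro h; subst h; simp

/-- Every stochastic choice data set admits a set-monotone RAUM representation.
In particular, letting `bst pr A` be the `pr`-best element of `A` and `κ_{pr,A}` the number of
orders whose best element of `A` coincides with `bst pr A`, the rule
`π_A(≻,φ) = 1{φ(A) = A} · ρ_A(bst ≻ A)/κ_{≻,A}` on menus `A ∈ 𝒜`, extended to `A ∉ 𝒜` by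
`π_A(≻,φ) = 1{φ(A) = A} · m_A(≻)` for an arbitrary probability distribution `m A` on `U`,
is a set-monotone RAUM representation of `ρ`. -/
theorem stmt1 {X : Type*} [Fintype X] [DecidableEq X]
    (𝒜 : Finset (Finset X)) (ρ : Finset X → X → ℝ) (hSCD : IsSCD 𝒜 ρ)
    (bst : Pref X → Finset X → X)
    (hbst : ∀ (pr : Pref X) (A : Finset X), A.Nonempty → wins pr.1 (bst pr A) A)
    (m : Finset X → Pref X → ℝ)
    (hm0 : ∀ A : Finset X, A.Nonempty → A ∉ 𝒜 → ∀ pr, 0 ≤ m A pr)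
    (hm1 : ∀ A : Finset X, A.Nonempty → A ∉ 𝒜 → ∑ pr : Pref X, m A pr = 1) :
    ∃ π : RAUM X,
      π.p = (fun A pr φ =>
        if fapp φ A = A then
          (if A ∈ 𝒜 then
            ρ A (bst pr A) /
              ((Finset.univ.filter (fun pr' : Pref X => bst pr' A = bst pr A)).card : ℝ)
           else m A pr)
        else 0) ∧
      SetMonotone π ∧ Represents ρ 𝒜 π := by
  classical
  obtain ⟨h𝒜ne, h𝒜, hρ⟩ := hSCD
  set c : Finset X → Pref X → ℝ := fun A pr =>
    if A ∈ 𝒜 then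
      ρ A (bst pr A) /
        ((Finset.univ.filter (fun pr' : Pref X => bst pr' A = bst pr A)).card : ℝ)
    else m A pr with hc
  set p : Finset X → Pref X → Filt X → ℝ := fun A pr φ =>
    if fapp φ A = A then c A pr else 0 with hp
  have hwins_iff : ∀ (pr : Pref X) (A : Finset X) (hA : A.Nonempty) (a : X),
      wins pr.1 a A ↔ bst pr A = a := by
    intro pr A hA a
    constructor
    · intro h; exact wins_unique pr.2 (hbst pr A hA) h
    · intro h; exact h ▸ hbst pr A hA
  have hfiber_ne : ∀ (A : Finset X), ∀ a ∈ A,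
      (Finset.univ.filter (fun pr' : Pref X => bst pr' A = a)).Nonempty := by
    intro A a ha
    obtain ⟨pr, hpr⟩ := pref_exists_top a
    refine ⟨pr, Finset.mem_filter.mpr ⟨Finset.mem_univ _, ?_⟩⟩
    refine (hwins_iff pr A ⟨a, ha⟩ a).mp ⟨ha, fun b hb => ?_⟩
    exact hpr b (Finset.mem_erase.mp hb).1
  have hcnn : ∀ (A : Finset X), A.Nonempty → ∀ pr, 0 ≤ c A pr := by
    intro A hA pr
    rw [hc]
    dsimp only
    split
    · exact div_nonneg ((hρ A (by assumption)).1 _ (hbst pr A hA).1) (by positivity)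
    · exact hm0 A hA (by assumption) pr
  have hsumφ : ∀ (A : Finset X) (hA : A.Nonempty) (x : ℝ),
      ∑ φ : Filt X, (if fapp φ A = A then x else 0) = x := by
    intro A hA x
    rw [Finset.sum_congr rfl (fun φ _ => by rw [if_congr (fapp_eq_self_iff hA φ) rfl rfl])]
    simp [Finset.sum_ite_eq' Finset.univ (⟨A, hA⟩ : Filt X) (fun _ => x)]
  have hcsum : ∀ A ∈ 𝒜, ∑ pr : Pref X, c A pr = 1 := by
    intro A hAmem
    have hA := h𝒜 A hAmem
    rw [hc]
    simp only [if_pos hAmem]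
    rw [← Finset.sum_fiberwise_of_maps_to (g := fun pr : Pref X => bst pr A) (t := A)
      (fun pr _ => (hbst pr A hA).1)]
    rw [← (hρ A hAmem).2]
    refine Finset.sum_congr rfl (fun b hb => ?_)
    have hcard : ((Finset.univ.filter (fun pr' : Pref X => bst pr' A = b)).card : ℝ) ≠ 0 := by
      exact_mod_cast Finset.card_ne_zero_of_mem (hfiber_ne A b hb).choose_spec
    rw [Finset.sum_congr rfl (fun pr hpr => ?_)]
    · rw [Finset.sum_const, nsmul_eq_mul, mul_div_cancel₀ _ hcard]
    · have hgb : bst pr A = b := (Finset.mem_filter.mp hpr).2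
      rw [hgb]
  have hnn : ∀ A : Finset X, A.Nonempty → ∀ pr φ, 0 ≤ p A pr φ := by
    intro A hA pr φ
    rw [hp]
    dsimp only
    split
    · exact hcnn A hA pr
    · exact le_refl 0
  have hs1 : ∀ A : Finset X, A.Nonempty → ∑ pr : Pref X, ∑ φ : Filt X, p A pr φ = 1 := by
    intro A hA
    rw [Finset.sum_congr rfl (fun pr _ => hsumφ A hA (c A pr))]
    by_cases hAmem : A ∈ 𝒜
    · exact hcsum A hAmem
    · rw [hc]
      simp only [if_neg hAmem]
      exact hm1 A hA hAmem
  have hfs : ∀ A : Finset X, A.Nonempty → ∀ pr φ, fapp φ A = ∅ → p A pr φ = 0 := by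
    intro A hA pr φ hφ
    rw [hp]
    dsimp only
    rw [if_neg]
    rw [hφ]
    exact fun h => hA.ne_empty h.symm
  refine ⟨⟨p, hnn, hs1, hfs⟩, rfl, ?_, ?_⟩
  · refine ⟨fun A pr φ => if fapp φ A = A then 1 else 0, ?_, ?_, ?_, ?_⟩
    · intro A hA pr
      refine ⟨fun φ => ?_, hsumφ A hA 1⟩
      dsimp only
      split <;> norm_num
    · intro A hA pr φ hφ
      dsimp only
      rw [if_neg]; rw [hφ]; exact fun h => hA.ne_empty h.symm
    · intro A B hA hAB pr φ hφ
      have hB : B.Nonempty := hA.mono hAB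
      dsimp only
      by_cases h : fapp φ B = B
      · have hφB : φ = ⟨B, hB⟩ := (fapp_eq_self_iff hB φ).mp h
        have hsub : φ.1 ⊆ A := by
          unfold fapp at hφ
          split at hφ
          · assumption
          · exact absurd rfl hφ
        have hABeq : A = B := Finset.Subset.antisymm hAB (by rw [hφB] at hsub; exact hsub)
        subst hABeq
        simp [h]
      · rw [if_neg h]
        split <;> norm_num
    · intro A hA pr φ
      dsimp only
      simp only [hp]
      rw [hsumφ A hA (c A pr)]
      split <;> ring
  · intro A hAmem a ha
    have hA := h𝒜 A hAmem
    dsimp only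
    have step1 : ∀ pr : Pref X, ∑ φ : Filt X,
        p A pr φ * (if wins pr.1 a (fapp φ A) then (1 : ℝ) else 0)
        = if bst pr A = a then c A pr else 0 := by
      intro pr
      have hterm : ∀ φ : Filt X, p A pr φ * (if wins pr.1 a (fapp φ A) then (1 : ℝ) else 0)
          = if fapp φ A = A then (if bst pr A = a then c A pr else 0) else 0 := by
        intro φ
        rw [hp]
        dsimp only
        by_cases h : fapp φ A = A
        · rw [if_pos h, if_pos h, h, if_congr (hwins_iff pr A hA a) rfl rfl]
          split <;> ring
        · rw [if_neg h, if_neg h, zero_mul]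
      rw [Finset.sum_congr rfl (fun φ _ => hterm φ), hsumφ A hA _]
    rw [Finset.sum_congr rfl (fun pr _ => step1 pr)]
    have hcard : ((Finset.univ.filter (fun pr' : Pref X => bst pr' A = a)).card : ℝ) ≠ 0 := by
      exact_mod_cast Finset.card_ne_zero_of_mem (hfiber_ne A a ha).choose_spec
    have hterm2 : ∀ pr : Pref X, (if bst pr A = a then c A pr else 0)
        = if bst pr A = a then
            ρ A a / ((Finset.univ.filter (fun pr' : Pref X => bst pr' A = a)).card : ℝ)
          else 0 := by
      intro pr
      by_cases h : bst pr A = a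
      · rw [if_pos h, if_pos h, hc]
        dsimp only
        rw [if_pos hAmem, h]
      · rw [if_neg h, if_neg h]
    rw [Finset.sum_congr rfl (fun pr _ => hterm2 pr), Finset.sum_ite, Finset.sum_const_zero,
      add_zero, Finset.sum_const, nsmul_eq_mul, mul_comm, div_mul_cancel₀ _ hcard]
end

section
/- There exists an incomplete stochastic choice data set that admits no set-monotone and stable RAUM representation. Concretely, let X = {a,b,c,d} with a,b,c,d distinct, let 𝒜 = {{a,b},{a,c},{b,d},{a,b,d},{a,c,d},{b,c,d}}, and let ρ be given by: ρ_{{a,b}}(a)=1, ρ_{{a,b}}(b)=0; ρ_{{a,c}}(a)=1, ρ_{{a,c}}(c)=0; ρ_{{b,d}}(b)=1, ρ_{{b,d}}(d)=0; ρ_{{a,b,d}}(b)=1, ρ_{{a,b,d}}(a)=ρ_{{a,b,d}}(d)=0; ρ_{{a,c,d}}(c)=1, ρ_{{a,c,d}}(a)=ρ_{{a,c,d}}(d)=0; and ρ_{{b,c,d}}(b)=α_b, ρ_{{b,c,d}}(c)=α_c, ρ_{{b,c,d}}(d)=α_d with α_b,α_c,α_d ≥ 0, α_b+α_c+α_d =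 1, and α_d > 0. Then ρ admits no RAUM representation that is both set-monotone and stable. -/
open Finset

lemma winner_exists {X : Type*} [DecidableEq X] {r : X → X → Bool} (hr : IsPref r) :
    ∀ S : Finset X, S.Nonempty → ∃ w ∈ S, ∀ x ∈ S.erase w, r w x = true := by
  intro S
  induction S using Finset.induction_on with
  | empty => intro h; exact absurd rfl h.ne_empty
  | @insert a S hnotmem ih =>
    intro _
    rcases S.eq_empty_or_nonempty with rfl | hS
    · exact ⟨a, by simp, by simp⟩
    · obtain ⟨w, hw, hwin⟩ := ih hS
      have haw : a ≠ w := fun h => hnotmem (h ▸ hw)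
      by_cases h : r a w = true
      · refine ⟨a, Finset.mem_insert_self a _, ?_⟩
        intro x hx
        obtain ⟨hxa, hxm⟩ := Finset.mem_erase.mp hx
        have hx' : x ∈ S := by
          rcases Finset.mem_insert.mp hxm with rfl | h'
          · exact absurd rfl hxa
          · exact h'
        by_cases hxw : x = w
        · subst hxw; exact h
        · exact hr.2.1 a w x h (hwin x (Finset.mem_erase.mpr ⟨hxw, hx'⟩))
      · have hwa : r w a = true := by
          rcases hr.2.2 a w haw with h' | h'
          · exact absurd h' h
          · exact h'
        refine ⟨w, Finset.mem_insert_of_mem hw, ?_⟩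
        intro x hx
        obtain ⟨hxw, hxm⟩ := Finset.mem_erase.mp hx
        rcases Finset.mem_insert.mp hxm with rfl | h'
        · exact hwa
        · exact hwin x (Finset.mem_erase.mpr ⟨hxw, h'⟩)

/-- There exists an incomplete stochastic choice data set admitting no
set-monotone and stable RAUM representation. Concretely, with `X = {a,b,c,d}` (distinct),
`𝒜 = {{a,b},{a,c},{b,d},{a,b,d},{a,c,d},{b,c,d}}`, and `ρ` as given (with `α_d > 0`),
`ρ` admits no RAUM representation that is both set-monotone and stable. -/
theorem stmt2 {X : Type*} [Fintype X] [DecidableEq X] (a b c d : X)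
    (hab : a ≠ b) (hac : a ≠ c) (had : a ≠ d) (hbc : b ≠ c) (hbd : b ≠ d) (hcd : c ≠ d)
    (huniv : (Finset.univ : Finset X) = {a, b, c, d})
    (𝒜 : Finset (Finset X))
    (h𝒜 : 𝒜 = {({a, b} : Finset X), {a, c}, {b, d}, {a, b, d}, {a, c, d}, {b, c, d}})
    (ρ : Finset X → X → ℝ) (hSCD : IsSCD 𝒜 ρ)
    (αb αc αd : ℝ) (hαb : 0 ≤ αb) (hαc : 0 ≤ αc) (hαd0 : 0 ≤ αd) (hαd : 0 < αd)
    (hαsum : αb + αc + αd = 1)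
    (h1 : ρ {a, b} a = 1) (h2 : ρ {a, b} b = 0)
    (h3 : ρ {a, c} a = 1) (h4 : ρ {a, c} c = 0)
    (h5 : ρ {b, d} b = 1) (h6 : ρ {b, d} d = 0)
    (h7 : ρ {a, b, d} b = 1) (h8 : ρ {a, b, d} a = 0) (h9 : ρ {a, b, d} d = 0)
    (h10 : ρ {a, c, d} c = 1) (h11 : ρ {a, c, d} a = 0) (h12 : ρ {a, c, d} d = 0)
    (h13 : ρ {b, c, d} b = αb) (h14 : ρ {b, c, d} c = αc) (h15 : ρ {b, c, d} d = αd) :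
    ¬ ∃ (π : RAUM X) (pstar : Pref X → ℝ),
        Stable π pstar ∧ SetMonotone π ∧ Represents ρ 𝒜 π := by
  rintro ⟨π, pstar, ⟨hps0, hps1, hstab⟩, ⟨lam, hlam1, hlam0, hlammono, hlameq⟩, hrep⟩
  -- π.p in terms of lam and pstar
  have hpi : ∀ A : Finset X, A.Nonempty → ∀ pr φ, π.p A pr φ = lam A pr φ * pstar pr := by
    intro A hA pr φ
    rw [hlameq A hA pr φ, hstab A hA pr]
  -- memberships in 𝒜
  have hm_ab : ({a, b} : Finset X) ∈ 𝒜 := by rw [h𝒜]; simp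
  have hm_ac : ({a, c} : Finset X) ∈ 𝒜 := by rw [h𝒜]; simp
  have hm_bd : ({b, d} : Finset X) ∈ 𝒜 := by rw [h𝒜]; simp
  have hm_abd : ({a, b, d} : Finset X) ∈ 𝒜 := by rw [h𝒜]; simp
  have hm_acd : ({a, c, d} : Finset X) ∈ 𝒜 := by rw [h𝒜]; simp
  have hm_bcd : ({b, c, d} : Finset X) ∈ 𝒜 := by rw [h𝒜]; simp
  -- zero lemma: if ρ A x = 0 and x wins at (A, pr, φ) with pstar pr > 0, then lam A pr φ = 0
  have hzero : ∀ A ∈ 𝒜, A.Nonempty → ∀ x ∈ A, ρ A x = 0 →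
      ∀ pr : Pref X, 0 < pstar pr → ∀ φ : Filt X, wins pr.1 x (fapp φ A) →
      lam A pr φ = 0 := by
    intro A hA hAne x hx hρ pr hpr φ hw
    have hrepx := hrep A hA x hx
    rw [hρ] at hrepx
    have hnn : ∀ pr' : Pref X, ∀ φ' : Filt X,
        0 ≤ π.p A pr' φ' * (if wins pr'.1 x (fapp φ' A) then (1 : ℝ) else 0) := by
      intro pr' φ'
      apply mul_nonneg (π.nonneg A hAne pr' φ')
      split <;> norm_num
    have houter := (Finset.sum_eq_zero_iff_of_nonneg
      (fun pr' _ => Finset.sum_nonneg (fun φ' _ => hnn pr' φ'))).mp hrepx.symm pr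
      (Finset.mem_univ pr)
    have hinner := (Finset.sum_eq_zero_iff_of_nonneg
      (fun φ' _ => hnn pr φ')).mp houter φ (Finset.mem_univ φ)
    rw [if_pos hw, mul_one, hpi A hAne pr φ] at hinner
    rcases mul_eq_zero.mp hinner with h | h
    · exact h
    · exact absurd h (ne_of_gt hpr)
  -- key lemma: y ≻ d for all pstar-positive preferences
  have hkey : ∀ x y : X, x ≠ y → y ≠ d → x ≠ d →
      ({x, y} : Finset X) ∈ 𝒜 → ({x, y, d} : Finset X) ∈ 𝒜 →
      ρ {x, y} y = 0 → ρ {x, y, d} x = 0 → ρ {x, y, d} d = 0 →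
      ∀ pr : Pref X, 0 < pstar pr → pr.1 y d = true := by
    intro x y hxy hyd hxd hm2 hm3 hρ2 hρx hρd pr hpr
    by_contra hyd'
    have hne3 : ({x, y, d} : Finset X).Nonempty := ⟨x, by simp⟩
    have hne2 : ({x, y} : Finset X).Nonempty := ⟨x, by simp⟩
    have hsum := (hlam1 {x, y, d} hne3 pr).2
    have hall : ∀ φ : Filt X, lam {x, y, d} pr φ = 0 := by
      intro φ
      by_cases hfe : fapp φ {x, y, d} = ∅
      · exact hlam0 {x, y, d} hne3 pr φ hfe
      · have hsub : φ.1 ⊆ {x, y, d} := by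
          by_contra hh
          exact hfe (by simp [fapp, hh])
        have hfeq : fapp φ {x, y, d} = φ.1 := by simp [fapp, hsub]
        obtain ⟨w, hwmem, hwwin⟩ := winner_exists pr.2 φ.1 φ.2
        have hwinA : wins pr.1 w (fapp φ {x, y, d}) := by
          rw [hfeq]; exact ⟨hwmem, hwwin⟩
        have hw3 : w = x ∨ w = y ∨ w = d := by
          have := hsub hwmem; simpa using this
        rcases hw3 with rfl | rfl | rfl
        · exact hzero _ hm3 hne3 w (by simp) hρx pr hpr φ hwinA
        · -- winner is y; then d ∉ φ, so φ ⊆ {x,y} and y wins at {x,y}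
          have hdnot : d ∉ φ.1 := by
            intro hd
            exact hyd' (hwwin d (Finset.mem_erase.mpr ⟨Ne.symm hyd, hd⟩))
          have hsub2 : φ.1 ⊆ {x, w} := by
            intro z hz
            have hz' := hsub hz
            simp only [Finset.mem_insert, Finset.mem_singleton] at hz' ⊢
            rcases hz' with h' | h' | h'
            · exact Or.inl h'
            · exact Or.inr h'
            · exact absurd (h' ▸ hz) hdnot
          have hfeq2 : fapp φ {x, w} = φ.1 := by simp [fapp, hsub2]
          have hwin2 : wins pr.1 w (fapp φ {x, w}) := by
            rw [hfeq2]; exact ⟨hwmem, hwwin⟩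
          have h0 : lam {x, w} pr φ = 0 :=
            hzero {x, w} hm2 hne2 w (by simp) hρ2 pr hpr φ hwin2
          have hmono := hlammono {x, w} {x, w, d} hne2
            (by intro z hz; simp only [Finset.mem_insert, Finset.mem_singleton] at hz ⊢; tauto)
            pr φ (by rw [hfeq2]; exact φ.2.ne_empty)
          have hge := (hlam1 {x, w, d} hne3 pr).1 φ
          linarith
        · exact hzero _ hm3 hne3 w (by simp) hρd pr hpr φ hwinA
    rw [Finset.sum_eq_zero (fun φ _ => hall φ)] at hsum
    exact absurd hsum (by norm_num)
  have hbd' : ∀ pr : Pref X, 0 < pstar pr → pr.1 b d = true :=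
    hkey a b hab hbd had hm_ab hm_abd h2 h8 h9
  have hcd' : ∀ pr : Pref X, 0 < pstar pr → pr.1 c d = true :=
    hkey a c hac hcd had hm_ac hm_acd h4 h11 h12
  -- final contradiction on menu {b,c,d}
  have hne_bcd : ({b, c, d} : Finset X).Nonempty := ⟨b, by simp⟩
  have hne_bd : ({b, d} : Finset X).Nonempty := ⟨b, by simp⟩
  have hrepd := hrep {b, c, d} hm_bcd d (by simp)
  rw [h15] at hrepd
  have hterm : ∀ pr : Pref X, ∀ φ : Filt X,
      π.p {b, c, d} pr φ * (if wins pr.1 d (fapp φ {b, c, d}) then (1 : ℝ) else 0) = 0 := by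
    intro pr φ
    by_cases hw : wins pr.1 d (fapp φ {b, c, d})
    · rw [if_pos hw, mul_one, hpi {b, c, d} hne_bcd pr φ]
      rcases eq_or_lt_of_le (hps0 pr) with h | h
      · rw [← h, mul_zero]
      · suffices hl : lam {b, c, d} pr φ = 0 by rw [hl, zero_mul]
        have hfne : fapp φ {b, c, d} ≠ ∅ := by
          intro h0; rw [h0] at hw; exact absurd hw.1 (Finset.notMem_empty d)
        have hsub : φ.1 ⊆ {b, c, d} := by
          by_contra hh; exact hfne (by simp [fapp, hh])
        have hfeq : fapp φ {b, c, d} = φ.1 := by simp [fapp, hsub]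
        rw [hfeq] at hw
        have hirr : ∀ z : X, pr.1 d z = true → pr.1 z d = true → False := by
          intro z h1' h2'
          exact pr.2.1 d (pr.2.2.1 d z d h1' h2')
        have hbno : b ∉ φ.1 := fun hbφ =>
          hirr b (hw.2 b (Finset.mem_erase.mpr ⟨hbd, hbφ⟩)) (hbd' pr h)
        have hcno : c ∉ φ.1 := fun hcφ =>
          hirr c (hw.2 c (Finset.mem_erase.mpr ⟨hcd, hcφ⟩)) (hcd' pr h)
        have hsub2 : φ.1 ⊆ {b, d} := by
          intro z hz
          have hz' := hsub hz
          simp only [Finset.mem_insert, Finset.mem_singleton] at hz' ⊢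
          rcases hz' with h' | h' | h'
          · exact absurd (h' ▸ hz) hbno
          · exact absurd (h' ▸ hz) hcno
          · exact Or.inr h'
        have hfeq2 : fapp φ {b, d} = φ.1 := by simp [fapp, hsub2]
        have hwin2 : wins pr.1 d (fapp φ {b, d}) := by rw [hfeq2]; exact hw
        have h0 : lam {b, d} pr φ = 0 :=
          hzero {b, d} hm_bd hne_bd d (by simp) h6 pr h φ hwin2
        have hmono := hlammono {b, d} {b, c, d} hne_bd
          (by intro z hz; simp only [Finset.mem_insert, Finset.mem_singleton] at hz ⊢; tauto)
          pr φ (by rw [hfeq2]; exact φ.2.ne_empty)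
        have hge := (hlam1 {b, c, d} hne_bcd pr).1 φ
        linarith
    · rw [if_neg hw, mul_zero]
  rw [Finset.sum_eq_zero (fun pr _ => Finset.sum_eq_zero (fun φ _ => hterm pr φ))] at hrepd
  linarith
end

section
/- Let a, b, d be three distinct elements of X, and suppose {a,b} ∈ 𝒜 and {a,b,d} ∈ 𝒜. If π is a set-monotone and stable RAUM representation of ρ with marginal π*, and the data satisfy ρ_{{a,b}}(b) = 0 and ρ_{{a,b,d}}(b) = 1, then Σ_{≻ ∈ U : b ≻ d} π*(≻) = 1, i.e., the marginal distribution over preferences places probability one on orders that rank b strictly above d. -/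
open Finset

/-- If `π` is a set-monotone and stable RAUM representation of `ρ` with
marginal `pstar`, `{a,b}, {a,b,d} ∈ 𝒜`, and the data satisfy `ρ_{{a,b}}(b) = 0` and
`ρ_{{a,b,d}}(b) = 1`, then the marginal distribution over preferences places probability
one on orders ranking `b` strictly above `d`. -/
theorem stmt3 {X : Type*} [Fintype X] [DecidableEq X] (a b d : X)
    (hab : a ≠ b) (had : a ≠ d) (hbd : b ≠ d)
    (𝒜 : Finset (Finset X)) (ρ : Finset X → X → ℝ) (hSCD : IsSCD 𝒜 ρ)
    (hA1 : ({a, b} : Finset X) ∈ 𝒜) (hA2 : ({a, b, d} : Finset X) ∈ 𝒜)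
    (π : RAUM X) (pstar : Pref X → ℝ)
    (hst : Stable π pstar) (hmon : SetMonotone π) (hrep : Represents ρ 𝒜 π)
    (h1 : ρ {a, b} b = 0) (h2 : ρ {a, b, d} b = 1) :
    ∑ pr ∈ Finset.univ.filter (fun pr : Pref X => pr.1 b d), pstar pr = 1 := by

  classical
  obtain ⟨lam, hlam_nn, hlam_feas, hlam_mono, hlam_eq⟩ := hmon
  obtain ⟨hp_nn, hp_sum, hp_stab⟩ := hst
  have hbmem : b ∈ ({a, b} : Finset X) := by simp
  have hbmem2 : b ∈ ({a, b, d} : Finset X) := by simp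
  have hAne : ({a, b} : Finset X).Nonempty := ⟨b, hbmem⟩
  have hBne : ({a, b, d} : Finset X).Nonempty := ⟨b, hbmem2⟩
  have hsub : ({a, b} : Finset X) ⊆ {a, b, d} := by
    intro x hx; simp at hx ⊢; tauto
  -- from ρ_{a,b}(b) = 0 : every term vanishes
  have hs1 : ∑ pr : Pref X, ∑ φ : Filt X,
      π.p {a, b} pr φ * (if wins pr.1 b (fapp φ {a, b}) then (1 : ℝ) else 0) = 0 := by
    rw [← hrep _ hA1 b hbmem]; exact h1
  have key1 : ∀ pr φ, wins pr.1 b (fapp φ {a, b}) → π.p {a, b} pr φ = 0 := by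
    intro pr φ hw
    have hnn : ∀ (pr : Pref X) (φ : Filt X),
        0 ≤ π.p {a, b} pr φ * (if wins pr.1 b (fapp φ {a, b}) then (1 : ℝ) else 0) := by
      intro pr φ
      exact mul_nonneg (π.nonneg _ hAne pr φ) (by split <;> norm_num)
    have houter := (Finset.sum_eq_zero_iff_of_nonneg
      (fun pr _ => Finset.sum_nonneg (fun φ _ => hnn pr φ))).mp hs1 pr (Finset.mem_univ pr)
    have hterm := (Finset.sum_eq_zero_iff_of_nonneg
      (fun φ _ => hnn pr φ)).mp houter φ (Finset.mem_univ φ)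
    rw [if_pos hw, mul_one] at hterm
    exact hterm
  -- from ρ_{a,b,d}(b) = 1 : mass only on (pr,φ) where b wins
  have hs2 : ∑ pr : Pref X, ∑ φ : Filt X,
      π.p {a, b, d} pr φ * (1 - if wins pr.1 b (fapp φ {a, b, d}) then (1 : ℝ) else 0) = 0 := by
    have e1 := π.sum_one {a, b, d} hBne
    have e2 : ∑ pr : Pref X, ∑ φ : Filt X,
        π.p {a, b, d} pr φ * (if wins pr.1 b (fapp φ {a, b, d}) then (1 : ℝ) else 0) = 1 := by
      rw [← hrep _ hA2 b hbmem2]; exact h2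
    simp only [mul_sub, mul_one, Finset.sum_sub_distrib]
    rw [e1, e2]; ring
  have key2 : ∀ pr φ, ¬ wins pr.1 b (fapp φ {a, b, d}) → π.p {a, b, d} pr φ = 0 := by
    intro pr φ hnw
    have hnn : ∀ (pr : Pref X) (φ : Filt X),
        0 ≤ π.p {a, b, d} pr φ * (1 - if wins pr.1 b (fapp φ {a, b, d}) then (1 : ℝ) else 0) := by
      intro pr φ
      exact mul_nonneg (π.nonneg _ hBne pr φ) (by split <;> norm_num)
    have houter := (Finset.sum_eq_zero_iff_of_nonneg
      (fun pr _ => Finset.sum_nonneg (fun φ _ => hnn pr φ))).mp hs2 pr (Finset.mem_univ pr)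
    have hterm := (Finset.sum_eq_zero_iff_of_nonneg
      (fun φ _ => hnn pr φ)).mp houter φ (Finset.mem_univ φ)
    rw [if_neg hnw] at hterm
    simpa using hterm
  -- main claim: preferences not ranking b above d have zero marginal mass
  have hzero : ∀ pr : Pref X, ¬ (pr.1 b d = true) → pstar pr = 0 := by
    intro pr hnbd
    by_contra hne
    have hpos : 0 < pstar pr := lt_of_le_of_ne (hp_nn pr) (Ne.symm hne)
    have hall : ∀ φ : Filt X, π.p {a, b, d} pr φ = 0 := by
      intro φ
      by_contra hpφ
      have hw : wins pr.1 b (fapp φ {a, b, d}) := by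
        by_contra hnw; exact hpφ (key2 pr φ hnw)
      have hfeas : fapp φ {a, b, d} ≠ ∅ := fun h => hpφ (π.feas _ hBne pr φ h)
      have hsubB : φ.1 ⊆ {a, b, d} := by
        by_contra hns; exact hfeas (by simp [fapp, hns])
      have hfB : fapp φ {a, b, d} = φ.1 := by simp [fapp, hsubB]
      rw [hfB] at hw
      have hdn : d ∉ φ.1 := by
        intro hd
        exact hnbd (hw.2 d (Finset.mem_erase.mpr ⟨Ne.symm hbd, hd⟩))
      have hsubA : φ.1 ⊆ {a, b} := by
        intro x hx
        have hxB := hsubB hx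
        simp at hxB ⊢
        rcases hxB with h | h | h
        · left; exact h
        · right; exact h
        · exact absurd (h ▸ hx) hdn
      have hfA : fapp φ {a, b} = φ.1 := by simp [fapp, hsubA]
      have hwA : wins pr.1 b (fapp φ {a, b}) := by rw [hfA]; exact hw
      have hpA0 := key1 pr φ hwA
      have heqA := hlam_eq {a, b} hAne pr φ
      rw [hp_stab {a, b} hAne pr, hpA0] at heqA
      have hlamA : lam {a, b} pr φ = 0 := by
        rcases mul_eq_zero.mp heqA.symm with h | h
        · exact h
        · exact absurd h (ne_of_gt hpos)
      have hfappAne : fapp φ {a, b} ≠ ∅ := by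
        rw [hfA]; exact Finset.nonempty_iff_ne_empty.mp φ.2
      have hlamB : lam {a, b, d} pr φ = 0 :=
        le_antisymm (hlamA ▸ hlam_mono {a, b} {a, b, d} hAne hsub pr φ hfappAne)
          ((hlam_nn {a, b, d} hBne pr).1 φ)
      have heqB := hlam_eq {a, b, d} hBne pr φ
      rw [hp_stab {a, b, d} hBne pr, hlamB, zero_mul] at heqB
      exact hpφ heqB
    have : pstar pr = 0 := by
      rw [← hp_stab {a, b, d} hBne pr]
      exact Finset.sum_eq_zero fun φ _ => hall φ
    exact hne this
  have hsplit := Finset.sum_filter_add_sum_filter_not Finset.univ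
    (fun pr : Pref X => pr.1 b d = true) pstar
  have h0 : ∑ pr ∈ Finset.univ.filter (fun pr : Pref X => ¬ (pr.1 b d = true)), pstar pr = 0 :=
    Finset.sum_eq_zero fun pr hpr => hzero pr (Finset.mem_filter.mp hpr).2
  rw [hp_sum] at hsplit
  have : ∑ pr ∈ Finset.univ.filter (fun pr : Pref X => pr.1 b d = true), pstar pr = 1 := by
    rw [h0] at hsplit; linarith
  simpa using this
end

section
/- A stochastic choice data set ρ admits a set-monotone and stable RAUM representation if and only if there exists a nonnegative function π defined on (nonempty subsets A of X) × U × Φ such that: (a) ρ_A(a) = Σ_{(≻,φ) ∈ U×Φ} π_A(≻,φ)·1{a ∈ φ(A) and a ≻ b for all b ∈ φ(A)\{a}} for all A ∈ 𝒜 and all a ∈ A; (b) Σ_{(≻,φ) ∈ U×Φ} π_A(≻,φ) = 1 for every nonempty A ⊆ X; (c) π_A(≻,φ) = 0 whenever φ(A) = ∅; (d) Σ_{φ∈Φ} π_A(≻,φ) = Σ_{φ∈Φ} π_B(≻,φ) for all nonempty A, B ⊆ X and all ≻ ∈ U; and (e) π_A(≻,φ) ≥ π_B(≻,φ) for all nonempty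 A ⊆ B ⊆ X, all ≻ ∈ U, and all φ ∈ Φ with φ(A) ≠ ∅. (Equivalently, a finite system of linear equalities in nonnegative unknowns, obtained from (e) by adding nonnegative slack variables, has a solution.) -/
open Finset

/-!
Conditions (a)–(c) say that `p` is a RAUM rule representing `ρ`, and (d) says that it is stable,
with marginal `π*(≻) = ∑_φ p_A(≻, φ)` for any nonempty menu `A`. For a stable rule, set-monotonicity
is equivalent to (e): `π_A(≻, ·) = π*(≻) · λ_{A,≻}`, so (e) follows from the monotonicity of `λ`,
and conversely `λ_{A,≻} := π_A(≻, ·) / π*(≻)` is set-monotone when `π*(≻) > 0`. When `π*(≻) = 0`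
any feasible, set-monotone `λ` will do; the point mass on `φ_A` is one, since `φ_B` is feasible at
`A ⊆ B` only if `A = B`.
-/

section

variable {X : Type*} [DecidableEq X]

lemma fapp_ne_empty_iff (φ : Filt X) (A : Finset X) : fapp φ A ≠ ∅ ↔ φ.1 ⊆ A := by
  unfold fapp
  split_ifs with h
  · simp [h, ← Finset.nonempty_iff_ne_empty, φ.2]
  · simp [h]

def menuDirac (A : Finset X) (φ : Filt X) : ℝ :=
  if φ.1 = A then 1 else 0

lemma menuDirac_nonneg (A : Finset X) (φ : Filt X) : 0 ≤ menuDirac A φ := by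
  unfold menuDirac
  split_ifs <;> norm_num

lemma menuDirac_eq_zero {A : Finset X} {φ : Filt X} (hφ : fapp φ A = ∅) : menuDirac A φ = 0 := by
  have hφA : φ.1 ≠ A := fun h => (fapp_ne_empty_iff φ A).mpr h.le hφ
  simp [menuDirac, hφA]

lemma menuDirac_antitone {A B : Finset X} {φ : Filt X} (hAB : A ⊆ B) (hφ : φ.1 ⊆ A) :
    menuDirac B φ ≤ menuDirac A φ := by
  unfold menuDirac
  by_cases hB : φ.1 = B
  · have hA : φ.1 = A := hφ.antisymm (hB ▸ hAB)
    rw [if_pos hB, if_pos hA]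
  · simp only [hB, if_false]
    exact menuDirac_nonneg A φ

variable [Fintype X]

lemma sum_menuDirac {A : Finset X} (hA : A.Nonempty) : ∑ φ : Filt X, menuDirac A φ = 1 := by
  have hval : ∀ φ : Filt X, φ.1 = A ↔ φ = ⟨A, hA⟩ := fun φ => by rw [Subtype.ext_iff]
  simp only [menuDirac, hval, Finset.sum_ite_eq', Finset.mem_univ, if_true]

lemma Stable.sum_eq_sum {π : RAUM X} {pstar : Pref X → ℝ} (hπ : Stable π pstar)
    {A B : Finset X} (hA : A.Nonempty) (hB : B.Nonempty) (pr : Pref X) :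
    ∑ φ : Filt X, π.p A pr φ = ∑ φ : Filt X, π.p B pr φ := by
  rw [hπ.2.2 A hA pr, hπ.2.2 B hB pr]

lemma RAUM.stable_marginal (π : RAUM X) {A₀ : Finset X} (hA₀ : A₀.Nonempty)
    (h : ∀ A B : Finset X, A.Nonempty → B.Nonempty → ∀ pr,
      ∑ φ : Filt X, π.p A pr φ = ∑ φ : Filt X, π.p B pr φ) :
    Stable π fun pr => ∑ φ : Filt X, π.p A₀ pr φ :=
  ⟨fun pr => Finset.sum_nonneg fun φ _ => π.nonneg A₀ hA₀ pr φ, π.sum_one A₀ hA₀,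
    fun A hA pr => h A A₀ hA hA₀ pr⟩

lemma SetMonotone.p_antitone {π : RAUM X} {pstar : Pref X → ℝ} (hπ : Stable π pstar)
    (hmono : SetMonotone π) {A B : Finset X} (hA : A.Nonempty) (hAB : A ⊆ B)
    (pr : Pref X) {φ : Filt X} (hφ : fapp φ A ≠ ∅) : π.p B pr φ ≤ π.p A pr φ := by
  obtain ⟨lam, -, -, hlam_anti, hπ_lam⟩ := hmono
  have hB : B.Nonempty := hA.mono hAB
  rw [hπ_lam A hA pr φ, hπ_lam B hB pr φ, hπ.2.2 A hA pr, hπ.2.2 B hB pr]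
  exact mul_le_mul_of_nonneg_right (hlam_anti A B hA hAB pr φ hφ) (hπ.1 pr)

namespace RAUM

noncomputable def condFilt (π : RAUM X) (pstar : Pref X → ℝ) (A : Finset X) (pr : Pref X)
    (φ : Filt X) : ℝ :=
  if pstar pr = 0 then menuDirac A φ else π.p A pr φ / pstar pr

variable {π : RAUM X} {pstar : Pref X → ℝ} {A B : Finset X} {φ : Filt X}

lemma condFilt_nonneg (hπ : Stable π pstar) (hA : A.Nonempty) (pr : Pref X) (φ : Filt X) :
    0 ≤ π.condFilt pstar A pr φ := by
  unfold condFilt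
  split_ifs
  · exact menuDirac_nonneg A φ
  · exact div_nonneg (π.nonneg A hA pr φ) (hπ.1 pr)

lemma sum_condFilt (hπ : Stable π pstar) (hA : A.Nonempty) (pr : Pref X) :
    ∑ φ : Filt X, π.condFilt pstar A pr φ = 1 := by
  unfold condFilt
  split_ifs with h0
  · exact sum_menuDirac hA
  · rw [← Finset.sum_div, hπ.2.2 A hA pr, div_self h0]

lemma condFilt_eq_zero (hA : A.Nonempty) (pr : Pref X) (hφ : fapp φ A = ∅) :
    π.condFilt pstar A pr φ = 0 := by
  unfold condFilt
  split_ifs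
  · exact menuDirac_eq_zero hφ
  · rw [π.feas A hA pr φ hφ, zero_div]

lemma condFilt_antitone (hπ : Stable π pstar) (hAB : A ⊆ B) (pr : Pref X)
    (hφ : fapp φ A ≠ ∅) (hp : π.p B pr φ ≤ π.p A pr φ) :
    π.condFilt pstar B pr φ ≤ π.condFilt pstar A pr φ := by
  unfold condFilt
  split_ifs
  · exact menuDirac_antitone hAB ((fapp_ne_empty_iff φ A).mp hφ)
  · exact div_le_div_of_nonneg_right hp (hπ.1 pr)

lemma p_eq_condFilt_mul (hπ : Stable π pstar) (hA : A.Nonempty) (pr : Pref X) (φ : Filt X) :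
    π.p A pr φ = π.condFilt pstar A pr φ * ∑ φ' : Filt X, π.p A pr φ' := by
  rw [hπ.2.2 A hA pr, condFilt]
  split_ifs with h0
  · have hmarg_zero : ∑ φ' : Filt X, π.p A pr φ' = 0 := (hπ.2.2 A hA pr).trans h0
    rw [h0, mul_zero]
    exact (Finset.sum_eq_zero_iff_of_nonneg fun φ' _ => π.nonneg A hA pr φ').mp hmarg_zero φ
      (Finset.mem_univ φ)
  · rw [div_mul_cancel₀ _ h0]

lemma setMonotone_of_antitone (hπ : Stable π pstar)
    (hanti : ∀ A B : Finset X, A.Nonempty → A ⊆ B → ∀ pr φ, fapp φ A ≠ ∅ →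
      π.p B pr φ ≤ π.p A pr φ) :
    SetMonotone π :=
  ⟨π.condFilt pstar, fun _ hA pr => ⟨condFilt_nonneg hπ hA pr, sum_condFilt hπ hA pr⟩,
    fun _ hA pr _ hφ => condFilt_eq_zero hA pr hφ,
    fun A B hA hAB pr φ hφ => condFilt_antitone hπ hAB pr hφ (hanti A B hA hAB pr φ hφ),
    fun _ hA pr φ => p_eq_condFilt_mul hπ hA pr φ⟩

end RAUM

end

/-- Theorem 1: `ρ` admits a set-monotone and stable RAUM representation if and
only if there exists a nonnegative function `p` on (nonempty menus) × U × Φ satisfying the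
linear restrictions (a)–(e): representation of the data, summing to one on every menu,
feasibility, stability of the preference marginal across menus, and set-monotonicity. -/
theorem stmt4 {X : Type*} [Fintype X] [DecidableEq X]
    (𝒜 : Finset (Finset X)) (ρ : Finset X → X → ℝ) (hSCD : IsSCD 𝒜 ρ) :
    (∃ (π : RAUM X) (pstar : Pref X → ℝ),
        Stable π pstar ∧ SetMonotone π ∧ Represents ρ 𝒜 π)
    ↔
    (∃ p : Finset X → Pref X → Filt X → ℝ,
      (∀ A : Finset X, A.Nonempty → ∀ pr φ, 0 ≤ p A pr φ) ∧
      (∀ A ∈ 𝒜, ∀ a ∈ A,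
        ρ A a = ∑ pr : Pref X, ∑ φ : Filt X,
          p A pr φ * (if wins pr.1 a (fapp φ A) then (1 : ℝ) else 0)) ∧
      (∀ A : Finset X, A.Nonempty → ∑ pr : Pref X, ∑ φ : Filt X, p A pr φ = 1) ∧
      (∀ A : Finset X, A.Nonempty → ∀ pr φ, fapp φ A = ∅ → p A pr φ = 0) ∧
      (∀ A B : Finset X, A.Nonempty → B.Nonempty → ∀ pr,
        ∑ φ : Filt X, p A pr φ = ∑ φ : Filt X, p B pr φ) ∧
      (∀ A B : Finset X, A.Nonempty → A ⊆ B → ∀ pr φ, fapp φ A ≠ ∅ →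
        p B pr φ ≤ p A pr φ)) := by
  constructor
  · rintro ⟨π, pstar, hstable, hmono, hrep⟩
    exact ⟨π.p, π.nonneg, hrep, π.sum_one, π.feas, fun A B hA hB => hstable.sum_eq_sum hA hB,
      fun A B hA hAB pr φ => hmono.p_antitone hstable hA hAB pr⟩
  · rintro ⟨p, hnonneg, hrep, hone, hfeas, hmarg, hanti⟩
    obtain ⟨A₀, hA₀⟩ := hSCD.1
    let π : RAUM X := ⟨p, hnonneg, hone, hfeas⟩
    have hstable := π.stable_marginal (hSCD.2.1 A₀ hA₀) hmarg
    exact ⟨π, _, hstable, RAUM.setMonotone_of_antitone hstable hanti, hrep⟩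
end

section
/- Suppose ρ is irregular, witnessed by menus A, B ∈ 𝒜 with A ⊆ B and an alternative a ∈ A such that ρ_B(a) > ρ_A(a). Then for every set-monotone and stable RAUM representation π of ρ with marginal π*, and for every strict linear order ≻ ∈ U under which a is the worst element of X (i.e., b ≻ a for all b ∈ X\{a}), one has π*(≻) < 1. In particular, the identified set of marginal preference distributions consistent with ρ is a strict subset of Δ(U). -/
/-!
If the marginal put all its mass on an order `≻` ranking `a` last, every menu `C ∋ a` would
choose `a` exactly when the consideration set is `{a}`, so `ρ_C(a) = π_C(≻, φ_{a})`. Under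
stability the total mass of `≻` is the same at every menu, so set-monotonicity makes
`π_C(≻, φ_{a})` antitone in `C`, which forces `ρ_B(a) ≤ ρ_A(a)` for `A ⊆ B`.
-/

open Finset

theorem eq_zero_of_sum_eq_one_of_one_le {ι : Type*} {s : Finset ι} {f : ι → ℝ}
    (hf : ∀ j ∈ s, 0 ≤ f j) (hsum : ∑ j ∈ s, f j = 1) {i : ι} (hi : i ∈ s) (h1 : 1 ≤ f i)
    {j : ι} (hj : j ∈ s) (hji : j ≠ i) : f j = 0 := by
  classical
  have hrest_nonneg : ∀ k ∈ s.erase i, 0 ≤ f k := fun k hk => hf k (mem_of_mem_erase hk)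
  have hrest : ∑ k ∈ s.erase i, f k = 0 := by
    linarith [add_sum_erase s f hi, sum_nonneg hrest_nonneg]
  exact (sum_eq_zero_iff_of_nonneg hrest_nonneg).1 hrest j (mem_erase.2 ⟨hji, hj⟩)

section

variable {X : Type*}

def Filt.singleton (a : X) : Filt X := ⟨{a}, singleton_nonempty a⟩

section

variable [DecidableEq X]

theorem eq_singleton_of_wins_of_worst {r : X → X → Bool} (hr : IsPref r) {a : X}
    (hworst : ∀ b, b ≠ a → r b a) {S : Finset X} (h : wins r a S) :
    S = {a} := by
  obtain ⟨hirrefl, htrans, -⟩ := hr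
  refine eq_singleton_iff_unique_mem.2 ⟨h.1, fun b hb => ?_⟩
  by_contra hba
  exact hirrefl a (htrans a b a (h.2 b (mem_erase.2 ⟨hba, hb⟩)) (hworst b hba))

theorem fapp_singleton_of_mem {a : X} {C : Finset X} (h : a ∈ C) :
    fapp (Filt.singleton a) C = {a} := by
  simp [fapp, Filt.singleton, h]

theorem eq_singleton_of_fapp_eq_singleton {φ : Filt X} {C : Finset X} {a : X}
    (h : fapp φ C = {a}) : φ = Filt.singleton a := by
  unfold fapp at h
  split_ifs at h
  · exact Subtype.ext h
  · exact absurd h (singleton_ne_empty a).symm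

theorem wins_fapp_iff_of_worst {r : X → X → Bool} (hr : IsPref r) {a : X}
    (hworst : ∀ b, b ≠ a → r b a) {C : Finset X} (haC : a ∈ C) (φ : Filt X) :
    wins r a (fapp φ C) ↔ φ = Filt.singleton a := by
  refine ⟨fun h => eq_singleton_of_fapp_eq_singleton (eq_singleton_of_wins_of_worst hr hworst h),
    ?_⟩
  rintro rfl
  rw [fapp_singleton_of_mem haC]
  exact ⟨mem_singleton_self a, by simp⟩

end

namespace Stable

variable [Fintype X] [DecidableEq X] {π : RAUM X} {pstar : Pref X → ℝ}

theorem p_eq_zero_of_one_le (hst : Stable π pstar) {pr : Pref X} (h1 : 1 ≤ pstar pr)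
    {C : Finset X} (hC : C.Nonempty) {pr' : Pref X} (hne : pr' ≠ pr) (φ : Filt X) :
    π.p C pr' φ = 0 := by
  obtain ⟨hnonneg, hsum, hmarg⟩ := hst
  have hzero : pstar pr' = 0 :=
    eq_zero_of_sum_eq_one_of_one_le (fun j _ => hnonneg j) hsum (mem_univ pr) h1
      (mem_univ pr') hne
  rw [← hmarg C hC pr'] at hzero
  exact (sum_eq_zero_iff_of_nonneg fun ψ _ => π.nonneg C hC pr' ψ).1 hzero φ (mem_univ φ)

/-- Under stability the scaling factor in set-monotonicity is the same at every menu. -/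
theorem p_antitone (hst : Stable π pstar) (hmon : SetMonotone π) {A B : Finset X}
    (hA : A.Nonempty) (hAB : A ⊆ B) (pr : Pref X) {φ : Filt X} (hφ : fapp φ A ≠ ∅) :
    π.p B pr φ ≤ π.p A pr φ := by
  obtain ⟨lam, -, -, hanti, hfactor⟩ := hmon
  rw [hfactor A hA, hfactor B (hA.mono hAB), hst.2.2 A hA, hst.2.2 B (hA.mono hAB)]
  exact mul_le_mul_of_nonneg_right (hanti A B hA hAB pr φ hφ) (hst.1 pr)

end Stable

theorem Represents.eq_p_singleton_of_worst [Fintype X] [DecidableEq X]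
    {𝒜 : Finset (Finset X)} {ρ : Finset X → X → ℝ} {π : RAUM X} {pstar : Pref X → ℝ}
    (hrep : Represents ρ 𝒜 π) (hst : Stable π pstar) {pr : Pref X} (h1 : 1 ≤ pstar pr)
    {a : X} (hworst : ∀ b, b ≠ a → pr.1 b a) {C : Finset X} (hC : C ∈ 𝒜) (haC : a ∈ C) :
    ρ C a = π.p C pr (Filt.singleton a) := by
  rw [hrep C hC a haC, sum_eq_single_of_mem pr (mem_univ pr)
    fun pr' _ hne => sum_eq_zero fun φ _ => by
      rw [hst.p_eq_zero_of_one_le h1 ⟨a, haC⟩ hne φ, zero_mul]]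
  simp only [wins_fapp_iff_of_worst pr.2 hworst haC, mul_ite, mul_one, mul_zero,
    sum_ite_eq', mem_univ, if_true]

end

theorem stmt5_general {X : Type*} [Fintype X] [DecidableEq X]
    (𝒜 : Finset (Finset X)) (ρ : Finset X → X → ℝ)
    (A B : Finset X) (hA : A ∈ 𝒜) (hB : B ∈ 𝒜) (hAB : A ⊆ B)
    (a : X) (ha : a ∈ A) (hirr : ρ A a < ρ B a)
    (π : RAUM X) (pstar : Pref X → ℝ)
    (hst : Stable π pstar) (hmon : SetMonotone π) (hrep : Represents ρ 𝒜 π)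
    (pr : Pref X) (hworst : ∀ b : X, b ≠ a → pr.1 b a) :
    pstar pr < 1 := by
  by_contra! h1
  have hρA := hrep.eq_p_singleton_of_worst hst h1 hworst hA ha
  have hρB := hrep.eq_p_singleton_of_worst hst h1 hworst hB (hAB ha)
  have hanti := hst.p_antitone hmon ⟨a, ha⟩ hAB pr
    (φ := Filt.singleton a) (by simp [fapp_singleton_of_mem ha])
  linarith

/-- Proposition 2: If `ρ` is irregular, witnessed by menus `A ⊆ B` in `𝒜` and
`a ∈ A` with `ρ_B(a) > ρ_A(a)`, then for every set-monotone and stable RAUM representation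
`π` of `ρ` with marginal `pstar` and every preference order under which `a` is the worst
element of `X`, the marginal probability of that order is strictly less than one. -/
theorem stmt5 {X : Type*} [Fintype X] [DecidableEq X]
    (𝒜 : Finset (Finset X)) (ρ : Finset X → X → ℝ) (hSCD : IsSCD 𝒜 ρ)
    (A B : Finset X) (hA : A ∈ 𝒜) (hB : B ∈ 𝒜) (hAB : A ⊆ B)
    (a : X) (ha : a ∈ A) (hirr : ρ A a < ρ B a)
    (π : RAUM X) (pstar : Pref X → ℝ)
    (hst : Stable π pstar) (hmon : SetMonotone π) (hrep : Represents ρ 𝒜 π)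
    (pr : Pref X) (hworst : ∀ b : X, b ≠ a → pr.1 b a) :
    pstar pr < 1 :=
  stmt5_general 𝒜 ρ A B hA hB hAB a ha hirr π pstar hst hmon hrep pr hworst
end

section
/- Let π be a set-monotone and stable RAUM representation of ρ with marginal π*, and let a ∈ X be such that π* places probability one on the set of orders under which a is the worst element of X, i.e., Σ_{≻ ∈ U : b ≻ a for all b ∈ X\{a}} π*(≻) = 1. Then ρ satisfies regularity at a: ρ_B(a) ≤ ρ_A(a) for all A, B ∈ 𝒜 with A ⊆ B and a ∈ A. Moreover, in this case ρ_B(a) = Σ_{≻ ∈ U} π_B(≻, φ_{{a}}) for every B ∈ 𝒜 with a ∈ B, where φ_{{a}} is the consideration filter with consideration set {a}. -/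
open Finset

/-- If `π` is a set-monotone and stable RAUM representation of `ρ` with marginal
`pstar`, and `pstar` places probability one on the orders under which `a` is the worst element
of `X`, then `ρ` satisfies regularity at `a`, and moreover `ρ_B(a)` equals the total mass put
by `π_B` on the singleton filter `φ_{{a}}` for every `B ∈ 𝒜` containing `a`. -/
theorem stmt6 {X : Type*} [Fintype X] [DecidableEq X]
    (𝒜 : Finset (Finset X)) (ρ : Finset X → X → ℝ) (hSCD : IsSCD 𝒜 ρ)
    (π : RAUM X) (pstar : Pref X → ℝ)
    (hst : Stable π pstar) (hmon : SetMonotone π) (hrep : Represents ρ 𝒜 π)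
    (a : X)
    (hworst : ∑ pr ∈ Finset.univ.filter
        (fun pr : Pref X => ∀ b ∈ Finset.univ.erase a, pr.1 b a), pstar pr = 1) :
    (∀ A ∈ 𝒜, ∀ B ∈ 𝒜, A ⊆ B → a ∈ A → ρ B a ≤ ρ A a) ∧
    (∀ B ∈ 𝒜, a ∈ B →
      ρ B a = ∑ pr : Pref X, π.p B pr ⟨{a}, Finset.singleton_nonempty a⟩) := by

  classical
  obtain ⟨h𝒜ne, hmem, hρ⟩ := hSCD
  obtain ⟨hps_nonneg, hps_one, hst3⟩ := hst
  obtain ⟨lam, hlam1, hlam0, hlammono, hlameq⟩ := hmon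
  set s : Filt X := ⟨{a}, Finset.singleton_nonempty a⟩ with hs
  -- pstar vanishes off the worst set
  have hzero : ∀ pr : Pref X, ¬ (∀ b ∈ Finset.univ.erase a, pr.1 b a) → pstar pr = 0 := by
    intro pr hpr
    have hsplit := Finset.sum_filter_add_sum_filter_not Finset.univ
      (fun pr : Pref X => ∀ b ∈ Finset.univ.erase a, pr.1 b a) pstar
    rw [hps_one, hworst] at hsplit
    have h0 : ∑ q ∈ Finset.univ.filter
        (fun q : Pref X => ¬ ∀ b ∈ Finset.univ.erase a, q.1 b a), pstar q = 0 := by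
      linarith
    exact (Finset.sum_eq_zero_iff_of_nonneg (fun q _ => hps_nonneg q)).mp h0 pr
      (Finset.mem_filter.mpr ⟨Finset.mem_univ _, hpr⟩)
  have hkey : ∀ B ∈ 𝒜, a ∈ B → ρ B a = ∑ pr : Pref X, π.p B pr s := by
    intro B hB haB
    have hBne : B.Nonempty := hmem B hB
    rw [hrep B hB a haB]
    refine Finset.sum_congr rfl ?_
    intro pr _
    by_cases hw : ∀ b ∈ Finset.univ.erase a, pr.1 b a
    · rw [Finset.sum_eq_single_of_mem s (Finset.mem_univ s)]
      · have hfapp : fapp s B = {a} := by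
          simp [fapp, hs, Finset.singleton_subset_iff.mpr haB]
        have hwin : wins pr.1 a (fapp s B) := by
          rw [hfapp]
          exact ⟨Finset.mem_singleton_self a, by simp⟩
        simp [hwin]
      · intro φ _ hφ
        by_cases hwin : wins pr.1 a (fapp φ B)
        · exfalso
          obtain ⟨hain, hbeats⟩ := hwin
          have hfeq : fapp φ B = φ.1 := by
            unfold fapp at hain ⊢
            by_cases hsub : φ.1 ⊆ B
            · simp [hsub]
            · simp [hsub] at hain
          have hsing : φ.1 = {a} := by
            rw [Finset.eq_singleton_iff_unique_mem]
            refine ⟨hfeq ▸ hain, ?_⟩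
            intro b hb
            by_contra hba
            have h1 : pr.1 a b := hbeats b (by
              rw [hfeq]; exact Finset.mem_erase.mpr ⟨hba, hb⟩)
            have h2 : pr.1 b a := hw b (Finset.mem_erase.mpr ⟨hba, Finset.mem_univ b⟩)
            exact pr.2.1 a (pr.2.2.1 a b a h1 h2)
          exact hφ (Subtype.ext hsing)
        · simp [hwin]
    · -- pstar pr = 0, so all masses vanish
      have hp0 : ∀ φ : Filt X, π.p B pr φ = 0 := by
        have hsum0 : ∑ φ : Filt X, π.p B pr φ = 0 := by
          rw [hst3 B hBne pr, hzero pr hw]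
        intro φ
        exact (Finset.sum_eq_zero_iff_of_nonneg
          (fun φ _ => π.nonneg B hBne pr φ)).mp hsum0 φ (Finset.mem_univ φ)
      simp [hp0]
  constructor
  · intro A hA B hB hAB haA
    have hAne : A.Nonempty := hmem A hA
    have hBne : B.Nonempty := hmem B hB
    have haB : a ∈ B := hAB haA
    rw [hkey A hA haA, hkey B hB haB]
    have hfA : fapp s A ≠ ∅ := by
      simp [fapp, hs, Finset.singleton_subset_iff.mpr haA]
    refine Finset.sum_le_sum ?_
    intro pr _
    rw [hlameq A hAne pr s, hlameq B hBne pr s, hst3 A hAne pr, hst3 B hBne pr]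
    exact mul_le_mul_of_nonneg_right (hlammono A B hAne hAB pr s hfA) (hps_nonneg pr)
  · exact hkey
end

section
/- (Lemma on attention-index consideration rules.) Suppose g̃ satisfies: for all nonempty A ⊆ A' ⊆ X, g̃(A) ⊆ g̃(A') and g̃(A')\g̃(A) ⊆ A'\A. Then the attention-index consideration probabilities are set-monotone: for every nonempty D ⊆ A ⊆ A' ⊆ X, m_A(D) ≥ m_{A'}(D). -/
open Finset

/-- Numerator of the attention-index consideration probability:
`Σ_{B ⊆ X \ g̃(A)} η(D ∪ B)`. -/
def aiNum {X : Type*} [Fintype X] [DecidableEq X] (η : Finset X → ℝ)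
    (gt : Finset X → Finset X) (A D : Finset X) : ℝ :=
  ∑ B ∈ (Finset.univ \ gt A).powerset, η (D ∪ B)

/-- Denominator of the attention-index consideration probability:
`Σ_{C ⊆ A, C ≠ ∅} Σ_{B ⊆ X \ g̃(A)} η(C ∪ B)`. -/
def aiDen {X : Type*} [Fintype X] [DecidableEq X] (η : Finset X → ℝ)
    (gt : Finset X → Finset X) (A : Finset X) : ℝ :=
  ∑ C ∈ A.powerset.erase ∅, ∑ B ∈ (Finset.univ \ gt A).powerset, η (C ∪ B)

/-- The attention-index consideration probability `m_A(D)`. -/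
noncomputable def mAI {X : Type*} [Fintype X] [DecidableEq X] (η : Finset X → ℝ)
    (gt : Finset X → Finset X) (A D : Finset X) : ℝ :=
  aiNum η gt A D / aiDen η gt A

/-- Lemma on attention-index consideration rules: if, for all nonempty
`A ⊆ A'`, `g̃(A) ⊆ g̃(A')` and `g̃(A') \ g̃(A) ⊆ A' \ A`, then the attention-index
consideration probabilities are set-monotone: `m_A(D) ≥ m_{A'}(D)` for every nonempty
`D ⊆ A ⊆ A'`. -/
theorem stmt7 {X : Type*} [Fintype X] [DecidableEq X]
    (η : Finset X → ℝ) (gt : Finset X → Finset X)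
    (hη0 : η ∅ = 0) (hηpos : ∀ D : Finset X, D.Nonempty → 0 < η D)
    (hg : ∀ A A' : Finset X, A.Nonempty → A ⊆ A' →
      gt A ⊆ gt A' ∧ gt A' \ gt A ⊆ A' \ A)
    (D A A' : Finset X) (hD : D.Nonempty) (hDA : D ⊆ A) (hAA' : A ⊆ A') :
    mAI η gt A' D ≤ mAI η gt A D := by
  have hA : A.Nonempty := hD.mono hDA
  obtain ⟨hGG', hdiff⟩ := hg A A' hA hAA'
  set S : Finset X := Finset.univ \ gt A with hS
  set S' : Finset X := Finset.univ \ gt A' with hS'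
  have hS'S : S' ⊆ S := sdiff_subset_sdiff (Finset.Subset.refl _) hGG'
  -- S \ S' is disjoint from A and contained in A'
  have hSS'A : ∀ x ∈ S \ S', x ∈ A' \ A := by
    intro x hx
    simp only [hS, hS', mem_sdiff, mem_univ, true_and, not_not] at hx
    exact hdiff (mem_sdiff.2 ⟨hx.2, hx.1⟩)
  -- numerator comparison
  have hnum : aiNum η gt A' D ≤ aiNum η gt A D := by
    apply Finset.sum_le_sum_of_subset_of_nonneg (powerset_mono.2 hS'S)
    intro B _ _
    exact le_of_lt (hηpos _ (hD.mono subset_union_left))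
  have hnum0 : 0 ≤ aiNum η gt A D := by
    apply Finset.sum_nonneg
    intro B _
    exact le_of_lt (hηpos _ (hD.mono subset_union_left))
  -- denominator positivity
  have hdenpos : 0 < aiDen η gt A := by
    apply Finset.sum_pos
    · intro C hC
      rw [mem_erase, mem_powerset] at hC
      apply Finset.sum_pos
      · intro B _
        exact hηpos _ ((nonempty_iff_ne_empty.2 hC.1).mono subset_union_left)
      · exact ⟨∅, mem_powerset.2 (empty_subset _)⟩
    · exact ⟨A, mem_erase.2 ⟨hA.ne_empty, mem_powerset.2 (Finset.Subset.refl A)⟩⟩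
  -- denominator comparison
  have hden : aiDen η gt A ≤ aiDen η gt A' := by
    unfold aiDen
    rw [← Finset.sum_product' (f := fun C B => η (C ∪ B)),
        ← Finset.sum_product' (f := fun C B => η (C ∪ B))]
    set P := (A.powerset.erase ∅) ×ˢ S.powerset with hP
    set P' := (A'.powerset.erase ∅) ×ˢ S'.powerset with hP'
    set e : Finset X × Finset X → Finset X × Finset X :=
      fun p => (p.1 ∪ (p.2 \ S'), p.2 ∩ S') with he
    -- membership facts on P
    have hmemP : ∀ p ∈ P, p.1 ⊆ A ∧ p.1 ≠ ∅ ∧ p.2 ⊆ S := by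
      intro p hp
      rw [hP, Finset.mem_product, mem_erase, mem_powerset, mem_powerset] at hp
      exact ⟨hp.1.2, hp.1.1, hp.2⟩
    have key1 : ∀ p ∈ P, (e p).1 ∩ A = p.1 := by
      intro p hp
      obtain ⟨h1, _, h3⟩ := hmemP p hp
      ext x
      simp only [he, mem_inter, mem_union, mem_sdiff]
      constructor
      · rintro ⟨hx1 | hx2, hxA⟩
        · exact hx1
        · exact absurd hxA (mem_sdiff.1 (hSS'A x (mem_sdiff.2 ⟨h3 hx2.1, hx2.2⟩))).2
      · intro hx; exact ⟨Or.inl hx, h1 hx⟩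
    have key2 : ∀ p ∈ P, ((e p).1 \ A) ∪ (e p).2 = p.2 := by
      intro p hp
      obtain ⟨h1, _, h3⟩ := hmemP p hp
      ext x
      simp only [he, mem_union, mem_sdiff, mem_inter]
      constructor
      · rintro (⟨hx1 | hx2, hxA⟩ | hx3)
        · exact absurd (h1 hx1) hxA
        · exact hx2.1
        · exact hx3.1
      · intro hx
        by_cases hxS' : x ∈ S'
        · exact Or.inr ⟨hx, hxS'⟩
        · exact Or.inl ⟨Or.inr ⟨hx, hxS'⟩,
            (mem_sdiff.1 (hSS'A x (mem_sdiff.2 ⟨h3 hx, hxS'⟩))).2⟩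
    have hinj : ∀ p ∈ P, ∀ q ∈ P, e p = e q → p = q := by
      intro p hp q hq hpq
      have h1 : p.1 = q.1 := by rw [← key1 p hp, ← key1 q hq, hpq]
      have h2 : p.2 = q.2 := by rw [← key2 p hp, ← key2 q hq, hpq]
      exact Prod.ext h1 h2
    have hunion : ∀ p ∈ P, (e p).1 ∪ (e p).2 = p.1 ∪ p.2 := by
      intro p hp
      simp only [he]
      rw [union_assoc, sdiff_union_inter]
    have himg : P.image e ⊆ P' := by
      intro q hq
      obtain ⟨p, hp, rfl⟩ := Finset.mem_image.1 hq
      obtain ⟨h1, h2, h3⟩ := hmemP p hp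
      rw [hP', Finset.mem_product, mem_erase, mem_powerset, mem_powerset]
      refine ⟨⟨?_, ?_⟩, ?_⟩
      · simp only [he]
        intro h
        exact h2 (subset_empty.1 (h ▸ subset_union_left))
      · simp only [he]
        apply union_subset (h1.trans hAA')
        intro x hx
        exact (mem_sdiff.1 (hSS'A x (mem_sdiff.2 ⟨h3 (mem_sdiff.1 hx).1,
          (mem_sdiff.1 hx).2⟩))).1
      · simp only [he]
        exact inter_subset_right
    calc ∑ p ∈ P, η (p.1 ∪ p.2)
        = ∑ p ∈ P, η ((e p).1 ∪ (e p).2) :=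
          Finset.sum_congr rfl (fun p hp => by rw [hunion p hp])
      _ = ∑ q ∈ P.image e, η (q.1 ∪ q.2) := (Finset.sum_image (f := fun q : Finset X × Finset X => η (q.1 ∪ q.2)) hinj).symm
      _ ≤ ∑ q ∈ P', η (q.1 ∪ q.2) := by
          apply Finset.sum_le_sum_of_subset_of_nonneg himg
          intro q hq _
          rw [hP', Finset.mem_product, mem_erase] at hq
          exact le_of_lt (hηpos _
            ((nonempty_iff_ne_empty.2 hq.1.1).mono subset_union_left))
  exact div_le_div₀ hnum0 hnum hdenpos hden
end

section
/- (Denominator monotonicity for attention-index rules.) Let η be a nonnegative real-valued function on subsets of X, and let A ⊆ A' be nonempty subsets of X such that g̃(A) ⊆ g̃(A') ⊆ X and g̃(A')\g̃(A) ⊆ A'\A. Then Σ_{C ⊆ A', C ≠ ∅} Σ_{B ⊆ X\g̃(A')} η(C ∪ B) ≥ Σ_{C ⊆ A, C ≠ ∅} Σ_{B ⊆ X\g̃(A)} η(C ∪ B). -/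
open Finset

/-- Denominator monotonicity for attention-index rules: for nonnegative `η`
and nonempty `A ⊆ A'` with `g̃(A) ⊆ g̃(A')` and `g̃(A') \ g̃(A) ⊆ A' \ A`, the denominator
of the attention-index rule at `A'` is at least the denominator at `A`. -/
theorem stmt9 {X : Type*} [Fintype X] [DecidableEq X]
    (η : Finset X → ℝ) (gt : Finset X → Finset X)
    (hη : ∀ S : Finset X, 0 ≤ η S)
    (A A' : Finset X) (hA : A.Nonempty) (hAA' : A ⊆ A')
    (hg1 : gt A ⊆ gt A') (hg2 : gt A' \ gt A ⊆ A' \ A) :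
    ∑ C ∈ A.powerset.erase ∅, ∑ B ∈ (Finset.univ \ gt A).powerset, η (C ∪ B)
      ≤ ∑ C ∈ A'.powerset.erase ∅, ∑ B ∈ (Finset.univ \ gt A').powerset, η (C ∪ B) := by
  classical
  -- rewrite both sides as sums over product sets
  rw [← Finset.sum_product' (s := A.powerset.erase ∅)
      (t := (Finset.univ \ gt A).powerset) (f := fun C B => η (C ∪ B)),
    ← Finset.sum_product' (s := A'.powerset.erase ∅)
      (t := (Finset.univ \ gt A').powerset) (f := fun C B => η (C ∪ B))]
  set s := (A.powerset.erase ∅) ×ˢ (Finset.univ \ gt A).powerset with hs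
  set t := (A'.powerset.erase ∅) ×ˢ (Finset.univ \ gt A').powerset with ht
  set φ : Finset X × Finset X → Finset X × Finset X :=
    fun p => (p.1 ∪ (p.2 ∩ gt A'), p.2 \ gt A') with hφ
  have hmem : ∀ p ∈ s, φ p ∈ t := by
    rintro ⟨C, B⟩ hp
    simp only [hs, Finset.mem_product, Finset.mem_erase, Finset.mem_powerset] at hp
    obtain ⟨⟨hC0, hCA⟩, hB⟩ := hp
    have hB' : B ∩ gt A' ⊆ A' \ A := by
      intro x hx
      simp only [Finset.mem_inter] at hx
      apply hg2
      simp only [Finset.mem_sdiff]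
      refine ⟨hx.2, fun hxg => ?_⟩
      have := hB hx.1
      simp only [Finset.mem_sdiff] at this
      exact this.2 hxg
    simp only [ht, hφ, Finset.mem_product, Finset.mem_erase, Finset.mem_powerset]
    refine ⟨⟨?_, ?_⟩, ?_⟩
    · intro h
      rw [Finset.union_eq_empty] at h
      exact hC0 h.1
    · exact Finset.union_subset (hCA.trans hAA')
        (hB'.trans (Finset.sdiff_subset))
    · intro x hx
      simp only [Finset.mem_sdiff] at hx ⊢
      exact ⟨Finset.mem_univ x, hx.2⟩
  have hinj : Set.InjOn φ s := by
    intro p hp q hq heq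
    obtain ⟨C, B⟩ := p
    obtain ⟨C', B'⟩ := q
    simp only [Finset.mem_coe, hs, Finset.mem_product, Finset.mem_erase,
      Finset.mem_powerset] at hp hq
    obtain ⟨⟨_, hCA⟩, hB⟩ := hp
    obtain ⟨⟨_, hCA'⟩, hB'⟩ := hq
    simp only [hφ, Prod.mk.injEq] at heq
    obtain ⟨h1, h2⟩ := heq
    have key : ∀ (B₀ : Finset X), B₀ ⊆ Finset.univ \ gt A →
        B₀ ∩ gt A' ∩ A = ∅ := by
      intro B₀ hB₀
      rw [Finset.eq_empty_iff_forall_notMem]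
      intro x hx
      simp only [Finset.mem_inter] at hx
      have hx2 := hg2 (by
        simp only [Finset.mem_sdiff]
        refine ⟨hx.1.2, fun hxg => ?_⟩
        have := hB₀ hx.1.1
        simp only [Finset.mem_sdiff] at this
        exact this.2 hxg)
      simp only [Finset.mem_sdiff] at hx2
      exact hx2.2 hx.2
    have hCdisj : ∀ (C₀ B₀ : Finset X), C₀ ⊆ A → B₀ ⊆ Finset.univ \ gt A →
        (C₀ ∪ B₀ ∩ gt A') ∩ A = C₀ := by
      intro C₀ B₀ hC₀ hB₀
      rw [Finset.union_inter_distrib_right, Finset.inter_eq_left.mpr hC₀,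
        key B₀ hB₀, Finset.union_empty]
    have hBg : ∀ (C₀ B₀ : Finset X), C₀ ⊆ A → B₀ ⊆ Finset.univ \ gt A →
        (C₀ ∪ B₀ ∩ gt A') \ A = B₀ ∩ gt A' := by
      intro C₀ B₀ hC₀ hB₀
      rw [Finset.union_sdiff_distrib, Finset.sdiff_eq_empty_iff_subset.mpr hC₀,
        Finset.empty_union, Finset.sdiff_eq_self_iff_disjoint.mpr]
      rw [Finset.disjoint_left]
      intro x hx hxA
      have := key B₀ hB₀
      rw [Finset.eq_empty_iff_forall_notMem] at this
      exact this x (Finset.mem_inter.mpr ⟨hx, hxA⟩)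
    have hCeq : C = C' := by
      have := congrArg (· ∩ A) h1
      simpa [hCdisj C B hCA hB, hCdisj C' B' hCA' hB'] using this
    have hBeq : B = B' := by
      have h3 := congrArg (· \ A) h1
      simp only [hBg C B hCA hB, hBg C' B' hCA' hB'] at h3
      have hdec : ∀ B₀ : Finset X, B₀ = B₀ ∩ gt A' ∪ B₀ \ gt A' := by
        intro B₀; ext x
        simp only [Finset.mem_union, Finset.mem_inter, Finset.mem_sdiff]
        tauto
      rw [hdec B, h3, h2, ← hdec B']
    exact Prod.ext hCeq hBeq
  calc ∑ p ∈ s, η (p.1 ∪ p.2)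
      = ∑ q ∈ s.image φ, η (q.1 ∪ q.2) := by
        rw [Finset.sum_image (fun p hp q hq h => hinj hp hq h)]
        apply Finset.sum_congr rfl
        rintro ⟨C, B⟩ hp
        simp only [hφ]
        congr 1
        ext x
        simp only [Finset.mem_union, Finset.mem_inter, Finset.mem_sdiff]
        tauto
    _ ≤ ∑ q ∈ t, η (q.1 ∪ q.2) := by
        apply Finset.sum_le_sum_of_subset_of_nonneg
        · intro q hq
          obtain ⟨p, hp, rfl⟩ := Finset.mem_image.mp hq
          exact hmem p hp
        · intro q _ _
          exact hη _
end

section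
/- (Regularity of rational-inattention choice probabilities for large δ.) Let μ_a, μ_b, μ_c > 0 with μ_a + μ_b + μ_c = 1, let δ > 0, and set δ₁* = 1/μ_c − 3. Define ρ_{{a,b}}(a) = ((μ_a/(μ_a+μ_b))·(2+δ) − 1)/δ and ρ_{{a,b,c}}(a) = (μ_a·(3+δ) − 1)/δ. Then ρ_{{a,b}}(a) − ρ_{{a,b,c}}(a) = μ_a·μ_c·(δ − δ₁*) / (δ·(μ_a + μ_b)); in particular, if δ > δ₁* then ρ_{{a,b}}(a) > ρ_{{a,b,c}}(a). -/
/-- Regularity of rational-inattention choice probabilities for large δ: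
with `ρ_{{a,b}}(a) = ((μ_a/(μ_a+μ_b))·(2+δ) − 1)/δ` and `ρ_{{a,b,c}}(a) = (μ_a·(3+δ) − 1)/δ`,
one has `ρ_{{a,b}}(a) − ρ_{{a,b,c}}(a) = μ_a·μ_c·(δ − δ₁*)/(δ·(μ_a+μ_b))` where
`δ₁* = 1/μ_c − 3`; in particular, `δ > δ₁*` implies `ρ_{{a,b}}(a) > ρ_{{a,b,c}}(a)`. -/
theorem stmt15 (μa μb μc δ : ℝ)
    (hμa : 0 < μa) (hμb : 0 < μb) (hμc : 0 < μc)
    (hsum : μa + μb + μc = 1) (hδ : 0 < δ) :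
    (μa / (μa + μb) * (2 + δ) - 1) / δ - (μa * (3 + δ) - 1) / δ
      = μa * μc * (δ - (1 / μc - 3)) / (δ * (μa + μb)) ∧
    (1 / μc - 3 < δ →
      (μa * (3 + δ) - 1) / δ < (μa / (μa + μb) * (2 + δ) - 1) / δ) := by
  have hab : 0 < μa + μb := by linarith
  have key : (μa / (μa + μb) * (2 + δ) - 1) / δ - (μa * (3 + δ) - 1) / δ
      = μa * μc * (δ - (1 / μc - 3)) / (δ * (μa + μb)) := by
    have hc : μc = 1 - μa - μb := by linarith
    subst hc
    field_simp
    ring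
  refine ⟨key, fun h => ?_⟩
  have hpos : 0 < μa * μc * (δ - (1 / μc - 3)) / (δ * (μa + μb)) := by
    apply div_pos
    · exact mul_pos (mul_pos hμa hμc) (by linarith)
    · exact mul_pos hδ hab
  linarith [key]
end
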